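/- arXiv:2201.12709 — 6 statements merged into one kernel-verified Lean document; each statement's English description precedes it below -/
import Mathlib

section
/- For λ > 0, γ > 1, and any real y, the minimum over υ ≥ 0 of (2υ|y| + (υ - λγ)²)/(2γ) equals the MCP value: λ|y| - y²/(2γ) if |y| ≤ γλ, and λ²γ/2 if |y| ≥ γλ. -/
noncomputable def mcp (γ lam y : ℝ) : ℝ :=
  if |y| ≤ γ * lam then lam * |y| - y ^ 2 / (2 * γ) else lam ^ 2 * γ / 2

theorem bemcp_min (lam γ y : ℝ) (hlam : 0 < lam) (hγ : 1 < γ) :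
    IsLeast ((fun υ => (2 * υ * |y| + (υ - lam * γ) ^ 2) / (2 * γ)) '' {υ | 0 ≤ υ})
      (mcp γ lam y) := by
  have hγ0 : (0:ℝ) < γ := lt_trans one_pos hγ
  have h2γ : (0:ℝ) < 2 * γ := by linarith
  have hsq := sq_abs y
  constructor
  · by_cases h : |y| ≤ γ * lam
    · refine ⟨lam * γ - |y|, by simp only [Set.mem_setOf_eq]; linarith, ?_⟩
      simp only [mcp, if_pos h]
      field_simp
      nlinarith [sq_abs y]
    · refine ⟨0, by simp, ?_⟩
      simp only [mcp, if_neg h]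
      field_simp
      ring
  · rintro z ⟨υ, hυ, rfl⟩
    simp only [Set.mem_setOf_eq] at hυ
    simp only [mcp]
    split_ifs with h
    · rw [le_div_iff₀ h2γ]
      have : y ^ 2 / (2 * γ) * (2 * γ) = y ^ 2 := by field_simp
      nlinarith [sq_nonneg (υ - lam * γ + |y|)]
    · rw [le_div_iff₀ h2γ]
      push_neg at h
      nlinarith [abs_nonneg y]
end

section
/- For λ > 0, γ > 1, and any real y, the MCP function h_{γ,λ}(y) equals the minimum over ω ≥ 0 of ω|y| + (γ/2)(ω - λ)². -/
theorem emcp_min (lam γ y : ℝ) (hlam : 0 < lam) (hγ : 1 < γ) :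
    IsLeast ((fun ω => ω * |y| + γ / 2 * (ω - lam) ^ 2) '' {ω | 0 ≤ ω})
      (mcp γ lam y) := by
  have hγ0 : (0:ℝ) < γ := by linarith
  constructor
  · by_cases h : |y| ≤ γ * lam
    · refine ⟨lam - |y| / γ, ?_, ?_⟩
      · simp only [Set.mem_setOf_eq, sub_nonneg, div_le_iff₀ hγ0]
        linarith
      · simp only [mcp, if_pos h]
        field_simp
        rw [← sq_abs y]
        ring
    · refine ⟨0, by simp, ?_⟩
      simp only [mcp, if_neg h]
      ring
  · rintro v ⟨ω, hω, rfl⟩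
    simp only [Set.mem_setOf_eq] at hω
    unfold mcp
    split_ifs with h
    · have key : y ^ 2 / (2 * γ) * (2 * γ) = y ^ 2 := by field_simp
      nlinarith [sq_nonneg (γ * ω - γ * lam + |y|), sq_abs y]
    · push_neg at h
      nlinarith [sq_nonneg ω, abs_nonneg y]
end

section
/- For λ > 0, γ > 1, the proximal operator of the MCP function, defined as P_{γ,λ}(y) = argmin_g [ (1/2)(g - y)² + h_{γ,λ}(g) ], is given explicitly by P_{γ,λ}(y) = min(|y|, max(γ(|y| - λ)/(γ - 1), 0)) · sign(y). That is, this point minimizes g ↦ (1/2)(g - y)² + h_{γ,λ}(g) over g ∈ ℝ. -/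
lemma mcp_neg (γ lam x : ℝ) : mcp γ lam (-x) = mcp γ lam x := by
  simp [mcp, abs_neg, neg_pow]

set_option maxHeartbeats 1000000 in
lemma key (lam γ : ℝ) (hlam : 0 < lam) (hγ : 1 < γ) (y : ℝ) (hy : 0 ≤ y) (g : ℝ) :
    (min y (max (γ * (y - lam) / (γ - 1)) 0) - y) ^ 2 / 2
      + mcp γ lam (min y (max (γ * (y - lam) / (γ - 1)) 0))
    ≤ (g - y) ^ 2 / 2 + mcp γ lam g := by
  have hγ0 : (0:ℝ) < γ := by linarith
  have hγ1 : (0:ℝ) < γ - 1 := by linarith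
  have hγne : γ ≠ 0 := ne_of_gt hγ0
  have h2 : (0:ℝ) < 2 * γ := by linarith
  have h2' : (2:ℝ) * γ ≠ 0 := ne_of_gt h2
  have hg1 : g ≤ |g| := le_abs_self g
  have hg3 : (0:ℝ) ≤ |g| := abs_nonneg g
  have hg4 : |g| ^ 2 = g ^ 2 := sq_abs g
  set q := min y (max (γ * (y - lam) / (γ - 1)) 0) with hqdef
  rcases le_or_gt y lam with hA | hA
  · have hq : q = 0 := by
      rw [hqdef, max_eq_right, min_eq_right hy]
      exact div_nonpos_of_nonpos_of_nonneg (by nlinarith) hγ1.le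
    clear_value q
    rw [hq]
    simp only [mcp, abs_zero]
    rw [if_pos (by positivity)]
    split_ifs with h1
    · rw [← sub_nonneg, ← mul_nonneg_iff_of_pos_right h2,
        show ((g - y) ^ 2 / 2 + (lam * |g| - g ^ 2 / (2 * γ))
          - ((0 - y) ^ 2 / 2 + (lam * 0 - 0 ^ 2 / (2 * γ)))) * (2 * γ)
          = γ * (g - y) ^ 2 + 2 * γ * lam * |g| - g ^ 2 - γ * y ^ 2 from by field_simp; ring]
      nlinarith [mul_nonneg hγ0.le (mul_nonneg hy (sub_nonneg.2 hg1)),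
        mul_nonneg hγ0.le (mul_nonneg (sub_nonneg.2 hA) hg3),
        mul_nonneg hγ1.le (sq_nonneg g)]
    · push_neg at h1
      have hz0 : (0:ℝ) ^ 2 / (2 * γ) = 0 := by simp
      rw [hz0]
      nlinarith [mul_nonneg (sub_nonneg.2 h1.le) (sub_nonneg.2 (show lam ≤ |g| by nlinarith)),
        mul_nonneg (mul_nonneg hγ1.le hlam.le) hg3,
        mul_nonneg (sub_nonneg.2 hA) hg3, mul_nonneg hy (sub_nonneg.2 hg1)]
  · rcases le_or_gt y (γ * lam) with hB | hB
    · have hqle : γ * (y - lam) / (γ - 1) ≤ y := by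
        rw [div_le_iff₀ hγ1]; nlinarith
      have hqnn : 0 ≤ γ * (y - lam) / (γ - 1) := by
        apply div_nonneg _ hγ1.le; nlinarith
      have hq : q = γ * (y - lam) / (γ - 1) := by
        rw [hqdef, max_eq_left hqnn, min_eq_right hqle]
      have hqr : q * (γ - 1) = γ * (y - lam) := by
        rw [hq]; field_simp
      have hq0 : 0 ≤ q := hq ▸ hqnn
      have hqy : q ≤ y := hq ▸ hqle
      have hz : (g - q) * (q * (γ - 1) - γ * (y - lam)) = 0 := by
        rw [sub_eq_zero.2 hqr, mul_zero]
      have hz2 : (|g| - q) * (q * (γ - 1) - γ * (y - lam)) = 0 := by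
        rw [sub_eq_zero.2 hqr, mul_zero]
      clear_value q
      clear hqdef hq
      simp only [mcp, abs_of_nonneg hq0]
      rw [if_pos (by linarith)]
      split_ifs with h1
      · rw [← sub_nonneg, ← mul_nonneg_iff_of_pos_right h2,
          show ((g - y) ^ 2 / 2 + (lam * |g| - g ^ 2 / (2 * γ))
            - ((q - y) ^ 2 / 2 + (lam * q - q ^ 2 / (2 * γ)))) * (2 * γ)
            = γ * (g - y) ^ 2 + 2 * γ * lam * |g| - g ^ 2
              - (γ * (q - y) ^ 2 + 2 * γ * lam * q - q ^ 2) from by field_simp; ring]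
        nlinarith [hz, mul_nonneg hγ1.le (sq_nonneg (g - q)),
          mul_nonneg (mul_nonneg hγ0.le hlam.le) (sub_nonneg.2 hg1)]
      · push_neg at h1
        rw [← sub_nonneg, ← mul_nonneg_iff_of_pos_right h2,
          show ((g - y) ^ 2 / 2 + lam ^ 2 * γ / 2
            - ((q - y) ^ 2 / 2 + (lam * q - q ^ 2 / (2 * γ)))) * (2 * γ)
            = γ * (g - y) ^ 2 + γ ^ 2 * lam ^ 2
              - (γ * (q - y) ^ 2 + 2 * γ * lam * q - q ^ 2) from by field_simp; ring]
        nlinarith [hz2, mul_nonneg hγ1.le (sq_nonneg (|g| - q)),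
          sq_nonneg (|g| - γ * lam),
          mul_nonneg (mul_nonneg hγ0.le hy) (sub_nonneg.2 hg1)]
    · have hq : q = y := by
        rw [hqdef, min_eq_left]
        exact le_max_of_le_left (by rw [le_div_iff₀ hγ1]; nlinarith)
      clear_value q
      have habsy : |y| = y := abs_of_nonneg hy
      rw [hq]
      clear hq hqdef q
      simp only [mcp, habsy]
      rw [if_neg (by push_neg; linarith)]
      split_ifs with h1
      · have hbr : 0 ≤ 2 * γ * (y - lam) - (γ - 1) * (|g| + γ * lam) := by
          nlinarith [mul_nonneg hγ1.le (sub_nonneg.2 h1)]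
        rw [← sub_nonneg, ← mul_nonneg_iff_of_pos_right h2,
          show ((g - y) ^ 2 / 2 + (lam * |g| - g ^ 2 / (2 * γ))
            - ((y - y) ^ 2 / 2 + lam ^ 2 * γ / 2)) * (2 * γ)
            = γ * (g - y) ^ 2 + 2 * γ * lam * |g| - g ^ 2 - γ ^ 2 * lam ^ 2 from by
              field_simp; ring]
        nlinarith [mul_nonneg (sub_nonneg.2 h1) hbr,
          mul_nonneg (mul_nonneg hγ0.le hy) (sub_nonneg.2 hg1),
          mul_nonneg hγ0.le (sq_nonneg (γ * lam - y))]
      · nlinarith [sq_nonneg (g - y)]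

theorem mcp_prox (lam γ : ℝ) (hlam : 0 < lam) (hγ : 1 < γ) (y : ℝ) :
    IsMinOn (fun g => (g - y) ^ 2 / 2 + mcp γ lam g) Set.univ
      (min |y| (max (γ * (|y| - lam) / (γ - 1)) 0) * Real.sign y) := by
  intro g _
  simp only [Set.mem_setOf_eq]
  rcases lt_trichotomy y 0 with hy | hy | hy
  · have habs : |y| = -y := abs_of_neg hy
    rw [habs, Real.sign_of_neg hy]
    have hkey := key lam γ hlam hγ (-y) (by linarith) (-g)
    rw [mcp_neg γ lam g, show (-g - -y : ℝ) ^ 2 = (g - y) ^ 2 from by ring] at hkey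
    set Q := min (-y) (max (γ * (-y - lam) / (γ - 1)) 0) with hQ
    rw [show Q * (-1) = -Q from by ring, mcp_neg γ lam Q,
      show (-Q - y : ℝ) ^ 2 = (Q - -y) ^ 2 from by ring]
    exact hkey
  · subst hy
    simp only [abs_zero, Real.sign_zero, mul_zero]
    have hkey := key lam γ hlam hγ 0 le_rfl g
    have hq0 : min (0:ℝ) (max (γ * (0 - lam) / (γ - 1)) 0) = 0 := by
      rw [max_eq_right, min_self]
      exact div_nonpos_of_nonpos_of_nonneg (by nlinarith) (by linarith)
    rwa [hq0] at hkey
  · have habs : |y| = y := abs_of_pos hy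
    rw [habs, Real.sign_of_pos hy, mul_one]
    exact key lam γ hlam hγ y hy.le g
end

section
/- For λ > 0, γ > 1, if |y| ≥ γλ, then g = y minimizes the function g ↦ (1/2)(g - y)² + h_{γ,λ}(g) over ℝ. -/
lemma mcp_of_abs_le {γ lam y : ℝ} (hγ : γ ≠ 0) (hy : |y| ≤ γ * lam) :
    mcp γ lam y = lam ^ 2 * γ / 2 - (γ * lam - |y|) ^ 2 / (2 * γ) := by
  rw [mcp, if_pos hy, ← sq_abs y]
  field_simp
  ring

lemma mcp_of_le_abs {γ lam y : ℝ} (hγ : γ ≠ 0) (hy : γ * lam ≤ |y|) :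
    mcp γ lam y = lam ^ 2 * γ / 2 := by
  rcases hy.lt_or_eq with hlt | heq
  · rw [mcp, if_neg hlt.not_ge]
  · rw [mcp_of_abs_le hγ heq.ge, heq, sub_self]
    ring

lemma sq_sub_abs_le_sq_sub {a g y : ℝ} (hg : |g| ≤ a) (hy : a ≤ |y|) :
    (a - |g|) ^ 2 ≤ (g - y) ^ 2 := by
  rw [← sq_abs (g - y)]
  refine pow_le_pow_left₀ (sub_nonneg.mpr hg) ?_ 2
  calc a - |g| ≤ |y| - |g| := by linarith
    _ ≤ |y - g| := abs_sub_abs_le_abs_sub y g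
    _ = |g - y| := abs_sub_comm y g

theorem mcp_prox_case1_general (lam γ y : ℝ) (hγ : 1 < γ)
    (hy : γ * lam ≤ |y|) :
    IsMinOn (fun g => (g - y) ^ 2 / 2 + mcp γ lam g) Set.univ y := by
  have hγ0 : γ ≠ 0 := (zero_lt_one.trans hγ).ne'
  refine isMinOn_univ_iff.mpr fun g => ?_
  rw [sub_self, mcp_of_le_abs hγ0 hy, zero_pow two_ne_zero, zero_div, zero_add]
  rcases le_total |g| (γ * lam) with hg | hg
  · rw [mcp_of_abs_le hγ0 hg]
    have hsq := sq_sub_abs_le_sq_sub hg hy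
    have hdiv : (γ * lam - |g|) ^ 2 / (2 * γ) ≤ (γ * lam - |g|) ^ 2 / 2 :=
      div_le_div_of_nonneg_left (sq_nonneg _) two_pos (by linarith)
    linarith
  · rw [mcp_of_le_abs hγ0 hg]
    linarith [sq_nonneg (g - y)]

theorem mcp_prox_case1 (lam γ y : ℝ) (hlam : 0 < lam) (hγ : 1 < γ)
    (hy : γ * lam ≤ |y|) :
    IsMinOn (fun g => (g - y) ^ 2 / 2 + mcp γ lam g) Set.univ y :=
  mcp_prox_case1_general lam γ y hγ hy
end

section
/- For λ > 0, γ > 1, if |y| ≤ λ, then g = 0 minimizes the function g ↦ (1/2)(g - y)² + h_{γ,λ}(g) over ℝ. -/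
theorem mcp_prox_case3 (lam γ y : ℝ) (hlam : 0 < lam) (hγ : 1 < γ)
    (hy : |y| ≤ lam) :
    IsMinOn (fun g => (g - y) ^ 2 / 2 + mcp γ lam g) Set.univ 0 := by
  intro g _
  simp only [Set.mem_setOf_eq]
  have hgy : g * y ≤ |g| * |y| := (le_abs_self _).trans (abs_mul g y).le
  have hga : |g| * |y| ≤ |g| * lam := mul_le_mul_of_nonneg_left hy (abs_nonneg g)
  have hsq : |g| ^ 2 = g ^ 2 := sq_abs g
  have hgn : 0 ≤ |g| := abs_nonneg g
  have hγ0 : (0:ℝ) < γ := by linarith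
  unfold mcp
  simp only [abs_zero]
  rw [if_pos (by positivity)]
  split_ifs with h
  · have key : 0 ≤ g ^ 2 / 2 - g ^ 2 / (2 * γ) := by
      rw [div_sub_div _ _ (by norm_num) (by positivity)]
      apply div_nonneg _ (by positivity)
      nlinarith
    have hc := hgy.trans hga
    ring_nf
    ring_nf at key hc
    linarith [key, hc]
  · push_neg at h
    have hc := hgy.trans hga
    ring_nf
    nlinarith [sq_nonneg (|g| - lam), hc]
end

section
/- For λ > 0, γ > 1, the proximal operator P_{γ,λ}(y) = min(|y|, max(γ(|y| - λ)/(γ-1), 0))·sign(y) is monotone nondecreasing in y on ℝ. -/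
noncomputable def mcpProx (γ lam y : ℝ) : ℝ :=
  min |y| (max (γ * (|y| - lam) / (γ - 1)) 0) * Real.sign y

lemma mcpProx_neg (γ lam y : ℝ) : mcpProx γ lam (-y) = - mcpProx γ lam y := by
  simp [mcpProx, Real.sign_neg, abs_neg]

lemma mcpProx_eq_of_nonneg (γ lam : ℝ) (hlam : 0 < lam) (hγ : 1 < γ) {y : ℝ} (hy : 0 ≤ y) :
    mcpProx γ lam y = min y (max (γ * (y - lam) / (γ - 1)) 0) := by
  rcases eq_or_lt_of_le hy with h | h
  · subst h
    have h1 : γ * (0 - lam) / (γ - 1) ≤ 0 := by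
      apply div_nonpos_of_nonpos_of_nonneg
      · nlinarith
      · linarith
    simp [mcpProx, max_eq_right h1]
  · rw [mcpProx, abs_of_nonneg hy, Real.sign_of_pos h, mul_one]

lemma mcpProx_nonneg (γ lam : ℝ) (hlam : 0 < lam) (hγ : 1 < γ) {y : ℝ} (hy : 0 ≤ y) :
    0 ≤ mcpProx γ lam y := by
  rw [mcpProx_eq_of_nonneg γ lam hlam hγ hy]
  exact le_min hy (le_max_right _ _)

lemma mcpProx_mono_nonneg (γ lam : ℝ) (hlam : 0 < lam) (hγ : 1 < γ) {a b : ℝ}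
    (ha : 0 ≤ a) (hab : a ≤ b) : mcpProx γ lam a ≤ mcpProx γ lam b := by
  rw [mcpProx_eq_of_nonneg γ lam hlam hγ ha,
      mcpProx_eq_of_nonneg γ lam hlam hγ (ha.trans hab)]
  apply min_le_min hab
  apply max_le_max _ le_rfl
  apply div_le_div_of_nonneg_right _ (by linarith)
  nlinarith

theorem mcp_prox_monotone (lam γ : ℝ) (hlam : 0 < lam) (hγ : 1 < γ) :
    Monotone (fun y => mcpProx γ lam y) := by
  intro a b hab
  simp only
  rcases le_total 0 a with ha | ha
  · exact mcpProx_mono_nonneg γ lam hlam hγ ha hab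
  rcases le_total b 0 with hb | hb
  · have h := mcpProx_mono_nonneg γ lam hlam hγ (by linarith : (0:ℝ) ≤ -b)
      (by linarith : -b ≤ -a)
    rw [mcpProx_neg, mcpProx_neg] at h
    linarith
  · have h1 : mcpProx γ lam a ≤ 0 := by
      have := mcpProx_nonneg γ lam hlam hγ (by linarith : (0:ℝ) ≤ -a)
      rw [mcpProx_neg] at this; linarith
    exact h1.trans (mcpProx_nonneg γ lam hlam hγ hb)
end
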